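/- arXiv:2309.01699 — 3 statements merged into one kernel-verified Lean document; each statement's English description precedes it below -/
import Mathlib

section
/- Let 1 ≤ p < ∞ with conjugate exponent q (q = ∞ when p = 1), and let f ∈ L^p(ℝ). Define Ψ_f(s) = ∫_ℝ ((1 - e^{-ist})/(it)) f(t) dt. Then for all s ∈ ℝ, |Ψ_f(s)| ≤ C_q ‖f‖_p |s|^{1/p}, where C_q = 4^{1/q} (∫_0^∞ |sin t / t|^q dt)^{1/q} and C_∞ = 1. -/
open MeasureTheory Real Set

lemma sinc_abs_le_one (x : ℝ) : |Real.sin x / x| ≤ 1 := by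
  rcases eq_or_ne x 0 with h | h
  · simp [h]
  · rw [abs_div]
    exact div_le_one_of_le₀ Real.abs_sin_le_abs (abs_nonneg _)

lemma norm_one_sub_exp (x : ℝ) : ‖1 - Complex.exp (x * Complex.I)‖ = 2 * |Real.sin (x / 2)| := by
  have h1 : Complex.normSq (1 - Complex.exp (↑x * Complex.I)) = 2 - 2 * Real.cos x := by
    rw [Complex.exp_mul_I]
    simp [Complex.normSq_apply, Complex.cos_ofReal_re, Complex.sin_ofReal_re,
      Complex.cos_ofReal_im, Complex.sin_ofReal_im]
    nlinarith [Real.sin_sq_add_cos_sq x]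
  rw [Complex.norm_def, h1, Real.abs_sin_half]
  rw [show (2:ℝ) * Real.sqrt ((1 - Real.cos x)/2) = Real.sqrt (4 * ((1 - Real.cos x)/2)) by
    rw [show (4:ℝ) = 2^2 by norm_num, Real.sqrt_mul (by positivity), Real.sqrt_sq (by norm_num)]]
  congr 1; ring

lemma norm_u (s t : ℝ) : ‖(1 - Complex.exp (-Complex.I * s * t)) / (Complex.I * t)‖ =
    |s| * |Real.sin (s * t / 2) / (s * t / 2)| := by
  rcases eq_or_ne t 0 with ht | ht
  · simp [ht]
  rcases eq_or_ne s 0 with hs | hs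
  · simp [hs]
  have hx : -Complex.I * s * t = ((-(s*t) : ℝ) : ℂ) * Complex.I := by push_cast; ring
  rw [hx, norm_div, norm_one_sub_exp, norm_mul, Complex.norm_I, Complex.norm_real, one_mul,
    show -(s*t)/2 = -(s*t/2) by ring, Real.sin_neg, abs_neg, abs_div]
  rw [Real.norm_eq_abs]
  have h1 : |s| ≠ 0 := abs_ne_zero.2 hs
  have h2 : |t| ≠ 0 := abs_ne_zero.2 ht
  rw [show |s*t/2| = |s| * |t| / 2 by rw [abs_div, abs_mul, abs_two]]
  field_simp

lemma F_meas {q : ℝ} (hq0 : 0 ≤ q) : Measurable (fun x : ℝ => |Real.sin x / x| ^ q) :=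
  (Real.continuous_rpow_const hq0).measurable.comp
    ((Real.continuous_sin.measurable.div measurable_id).abs)

lemma F_abs (q x : ℝ) : |Real.sin x / x| ^ q = (abs (Real.sin |x| / |x|)) ^ q := by
  rcases abs_cases x with ⟨h, _⟩ | ⟨h, _⟩
  · rw [h]
  · rw [h, Real.sin_neg, neg_div_neg_eq]

lemma F_integrableOn_Ioi {q : ℝ} (hq : 1 < q) :
    IntegrableOn (fun x : ℝ => |Real.sin x / x| ^ q) (Ioi 0) := by
  have hq0 : (0:ℝ) ≤ q := by linarith
  have h0 : IntegrableOn (fun x : ℝ => |Real.sin x / x| ^ q) (Ioc 0 1) := by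
    apply Measure.integrableOn_of_bounded (M := 1) (by simp) (F_meas hq0).aestronglyMeasurable
    refine ae_of_all _ fun x => ?_
    rw [Real.norm_eq_abs, abs_of_nonneg (Real.rpow_nonneg (abs_nonneg _) _)]
    exact Real.rpow_le_one (abs_nonneg _) (sinc_abs_le_one x) hq0
  have h1 : IntegrableOn (fun x : ℝ => |Real.sin x / x| ^ q) (Ioi 1) := by
    refine Integrable.mono (integrableOn_Ioi_rpow_of_lt (by linarith : -q < -1) one_pos)
      (F_meas hq0).aestronglyMeasurable ?_
    refine (ae_restrict_iff' measurableSet_Ioi).2 (ae_of_all _ fun x hx => ?_)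
    have hx1 : (1:ℝ) < x := hx
    have hx0 : (0:ℝ) < x := by linarith
    rw [Real.norm_eq_abs, abs_of_nonneg (Real.rpow_nonneg (abs_nonneg _) _),
      Real.norm_eq_abs, abs_of_nonneg (Real.rpow_nonneg hx0.le _)]
    have hb : |Real.sin x / x| ≤ x⁻¹ := by
      rw [abs_div, abs_of_pos hx0, ← one_div]
      exact div_le_div_of_nonneg_right
        (abs_le.mpr ⟨Real.neg_one_le_sin x, Real.sin_le_one x⟩) hx0.le |>.trans_eq rfl
    calc |Real.sin x / x| ^ q ≤ (x⁻¹) ^ q :=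
          Real.rpow_le_rpow (abs_nonneg _) hb hq0
      _ = x ^ (-q) := by rw [Real.inv_rpow hx0.le, ← Real.rpow_neg hx0.le]
  have := h0.union h1
  rwa [Ioc_union_Ioi_eq_Ioi zero_le_one] at this

lemma F_integrable {q : ℝ} (hq : 1 < q) :
    Integrable (fun x : ℝ => |Real.sin x / x| ^ q) := by
  have hIoi := F_integrableOn_Ioi hq
  have hIic : IntegrableOn (fun x : ℝ => |Real.sin x / x| ^ q) (Iic 0) := by
    rw [← Measure.map_neg_eq_self (volume : Measure ℝ)]
    have m : MeasurableEmbedding fun x : ℝ => -x := (Homeomorph.neg ℝ).measurableEmbedding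
    rw [m.integrableOn_map_iff]
    simp_rw [Function.comp_def, Real.sin_neg, neg_div_neg_eq, neg_preimage, neg_Iic, neg_zero]
    exact Iff.mpr integrableOn_Ici_iff_integrableOn_Ioi hIoi
  have h := hIic.union hIoi
  rwa [Iic_union_Ioi, integrableOn_univ] at h

lemma F_integral (q : ℝ) :
    ∫ x : ℝ, |Real.sin x / x| ^ q = 2 * ∫ x in Ioi (0:ℝ), |Real.sin x / x| ^ q := by
  rw [← integral_comp_abs (f := fun x : ℝ => |Real.sin x / x| ^ q)]
  exact integral_congr_ae (ae_of_all _ fun x => F_abs q x)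

theorem Psi_pointwise_bound (p : ℝ) (hp : 1 ≤ p) (f : ℝ → ℂ)
    (hf : MemLp f (ENNReal.ofReal p) volume) :
    ∀ s : ℝ,
      ‖∫ t : ℝ, (1 - Complex.exp (-Complex.I * s * t)) / (Complex.I * t) * f t‖ ≤
        (if p = 1 then 1 else
          (4 : ℝ) ^ ((p - 1) / p) *
            (∫ t in Set.Ioi (0 : ℝ), |Real.sin t / t| ^ (p / (p - 1))) ^ ((p - 1) / p)) *
          (eLpNorm f (ENNReal.ofReal p) volume).toReal * |s| ^ (1 / p) := by
  intro s
  have hp0 : (0:ℝ) < p := by linarith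
  -- dispose of s = 0
  rcases eq_or_ne s 0 with hs | hs
  · subst hs
    have : ∀ t : ℝ, (1 - Complex.exp (-Complex.I * (0:ℝ) * t)) / (Complex.I * t) * f t = 0 := by
      intro t; simp
    rw [show (∫ t : ℝ, (1 - Complex.exp (-Complex.I * (0:ℝ) * t)) / (Complex.I * t) * f t)
        = 0 by rw [← integral_zero ℝ ℂ]; exact integral_congr_ae (ae_of_all _ this)]
    rw [norm_zero, abs_zero, Real.zero_rpow (one_div_ne_zero (by linarith)), mul_zero]
  rcases eq_or_lt_of_le hp with hp1 | hp1
  · -- p = 1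
    subst hp1
    rw [if_pos rfl]
    rw [ENNReal.ofReal_one] at hf ⊢
    have hfi : Integrable f := memLp_one_iff_integrable.mp hf
    have hE : (eLpNorm f 1 volume).toReal = ∫ t, ‖f t‖ := by
      rw [hf.eLpNorm_eq_integral_rpow_norm one_ne_zero ENNReal.one_ne_top,
        ENNReal.toReal_ofReal (by positivity)]
      simp
    calc ‖∫ t : ℝ, (1 - Complex.exp (-Complex.I * s * t)) / (Complex.I * t) * f t‖
        ≤ ∫ t : ℝ, ‖(1 - Complex.exp (-Complex.I * s * t)) / (Complex.I * t) * f t‖ :=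
          norm_integral_le_integral_norm _
      _ ≤ ∫ t : ℝ, |s| * ‖f t‖ := by
          refine integral_mono_of_nonneg (ae_of_all _ fun t => norm_nonneg _)
            ((hfi.norm).const_mul _) (ae_of_all _ fun t => ?_)
          dsimp only
          rw [norm_mul, norm_u s t]
          refine mul_le_mul_of_nonneg_right ?_ (norm_nonneg _)
          calc |s| * |Real.sin (s * t / 2) / (s * t / 2)| ≤ |s| * 1 :=
                mul_le_mul_of_nonneg_left (sinc_abs_le_one _) (abs_nonneg _)
            _ = |s| := mul_one _
      _ = |s| * ∫ t, ‖f t‖ := integral_const_mul _ _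
      _ = 1 * (eLpNorm f 1 volume).toReal * |s| ^ (1 / (1:ℝ)) := by
          rw [hE]; simp; ring
  · -- 1 < p
    set q : ℝ := p / (p - 1) with hqdef
    have hpq : p.HolderConjugate q := Real.HolderConjugate.conjExponent hp1
    have hq1 : 1 < q := hpq.symm.lt
    have hq0 : (0:ℝ) ≤ q := by linarith
    have habs : (0:ℝ) < |s| := abs_pos.2 hs
    set u : ℝ → ℂ := fun t => (1 - Complex.exp (-Complex.I * s * t)) / (Complex.I * t) with hu
    set g : ℝ → ℝ := fun t => ‖u t‖ with hg
    have humeas : Measurable u := by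
      apply Measurable.div
      · exact measurable_const.sub
          (Complex.measurable_exp.comp (measurable_const.mul Complex.measurable_ofReal))
      · exact measurable_const.mul Complex.measurable_ofReal
    have hgmeas : Measurable g := humeas.norm
    set I : ℝ := ∫ x in Ioi (0:ℝ), |Real.sin x / x| ^ q with hI
    have hI0 : 0 ≤ I := setIntegral_nonneg measurableSet_Ioi
      (fun x _ => Real.rpow_nonneg (abs_nonneg _) _)
    -- pointwise formula for g^q
    have h1 : ∀ t : ℝ, g t ^ q = |s| ^ q * |Real.sin ((s/2) * t) / ((s/2) * t)| ^ q := fun t => by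
      rw [hg, hu]
      dsimp only
      rw [norm_u s t, Real.mul_rpow (abs_nonneg _) (abs_nonneg _),
        show (s/2) * t = s * t / 2 by ring]
    -- integrability of g^q and key value
    have hFint := F_integrable hq1
    have hgq_int : Integrable (fun t => g t ^ q) := by
      have := (hFint.comp_mul_left' (R := s/2) (by simpa using hs)).const_mul (|s| ^ q)
      exact this.congr (ae_of_all _ fun t => (h1 t).symm)
    have key : ∫ t : ℝ, g t ^ q = 4 * I * |s| ^ (q - 1) := by
      simp only [h1]
      rw [integral_const_mul, Measure.integral_comp_mul_left
        (fun x : ℝ => |Real.sin x / x| ^ q) (s/2), F_integral q, smul_eq_mul]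
      rw [abs_inv, abs_div, abs_two, Real.rpow_sub habs, Real.rpow_one]
      rw [hI]
      field_simp
      ring
    -- Memℒp g q
    have hqne0 : (ENNReal.ofReal q) ≠ 0 := by simp [ENNReal.ofReal_eq_zero]; linarith
    have hg_mem : MemLp g (ENNReal.ofReal q) volume := by
      rw [← memLp_norm_rpow_iff hgmeas.aestronglyMeasurable hqne0 ENNReal.ofReal_ne_top,
        ENNReal.div_self hqne0 ENNReal.ofReal_ne_top, memLp_one_iff_integrable]
      refine hgq_int.congr (ae_of_all _ fun t => ?_)
      dsimp only
      rw [ENNReal.toReal_ofReal hq0, Real.norm_eq_abs,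
        abs_of_nonneg (show (0:ℝ) ≤ g t from norm_nonneg _)]
    -- Hölder
    have holder := integral_mul_le_Lp_mul_Lq_of_nonneg hpq.symm
      (ae_of_all _ fun t => norm_nonneg (u t) : (0:ℝ → ℝ) ≤ᵐ[volume] g)
      (ae_of_all _ fun t => norm_nonneg (f t)) hg_mem hf.norm
    -- identify Lp norm of f
    have hpne0 : (ENNReal.ofReal p) ≠ 0 := by simp [ENNReal.ofReal_eq_zero]; linarith
    have hE : (∫ t : ℝ, ‖f t‖ ^ p) ^ (1/p) = (eLpNorm f (ENNReal.ofReal p) volume).toReal := by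
      rw [hf.eLpNorm_eq_integral_rpow_norm hpne0 ENNReal.ofReal_ne_top,
        ENNReal.toReal_ofReal (by positivity), ENNReal.toReal_ofReal hp0.le, one_div]
    rw [if_neg (by linarith : p ≠ 1)]
    have hconj1 : (p - 1) / p = 1 / q := by
      rw [hqdef]; field_simp
    have hpm1 : p - 1 ≠ 0 := by linarith
    have hconj2 : (q - 1) * (1 / q) = 1 / p := by
      rw [hqdef]; field_simp; ring
    calc ‖∫ t : ℝ, u t * f t‖
        ≤ ∫ t : ℝ, ‖u t * f t‖ := norm_integral_le_integral_norm _
      _ = ∫ t : ℝ, g t * ‖f t‖ := integral_congr_ae (ae_of_all _ fun t => norm_mul _ _)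
      _ ≤ (∫ t : ℝ, g t ^ q) ^ (1/q) * (∫ t : ℝ, ‖f t‖ ^ p) ^ (1/p) := holder
      _ = (4 * I * |s| ^ (q - 1)) ^ (1/q) * (eLpNorm f (ENNReal.ofReal p) volume).toReal := by
          rw [key, hE]
      _ = (4 : ℝ) ^ ((p-1)/p) * I ^ ((p-1)/p) * (eLpNorm f (ENNReal.ofReal p) volume).toReal
            * |s| ^ (1/p) := by
          rw [Real.mul_rpow (by positivity) (Real.rpow_nonneg (abs_nonneg _) _),
            Real.mul_rpow (by norm_num) hI0, ← Real.rpow_mul (abs_nonneg s), hconj2, ← hconj1]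
          ring
      _ = ((4:ℝ) ^ ((p-1)/p) * I ^ ((p-1)/p)) * (eLpNorm f (ENNReal.ofReal p) volume).toReal
            * |s| ^ (1/p) := by ring
end

section
/- Let 1 ≤ p < ∞ and f ∈ L^1(ℝ) ∩ L^p(ℝ) (or just f ∈ L^p(ℝ)). If Ψ_f(s) = 0 for all s ∈ ℝ, then f = 0 almost everywhere. -/
open MeasureTheory Real SchwartzMap
open scoped FourierTransform ENNReal ContDiff

noncomputable section AuxPsi

/-- a compactly supported smooth function is a Schwartz function -/
def schwartzOfCompactSupport (g : ℝ → ℂ) (hg : ContDiff ℝ ∞ g)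
    (hsupp : HasCompactSupport g) : SchwartzMap ℝ ℂ where
  toFun := g
  smooth' := hg
  decay' := by
    intro k n
    have h1 : HasCompactSupport (iteratedFDeriv ℝ n g) := hsupp.iteratedFDeriv n
    have hc : Continuous fun x : ℝ => ‖x‖ ^ k * ‖iteratedFDeriv ℝ n g x‖ :=
      (continuous_norm.pow k).mul (hg.continuous_iteratedFDeriv (by exact_mod_cast le_top)).norm
    have h2 : HasCompactSupport fun x : ℝ => ‖x‖ ^ k * ‖iteratedFDeriv ℝ n g x‖ :=
      (h1.norm).mul_left
    obtain ⟨C, hC⟩ := hc.bounded_above_of_compact_support h2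
    refine ⟨C, fun x => ?_⟩
    have := hC x
    rw [Real.norm_eq_abs] at this
    exact (le_abs_self _).trans this

lemma psi_normK_le (s t : ℝ) :
    ‖(1 - Complex.exp (-Complex.I * s * t)) / (Complex.I * t)‖ ≤
      2 * (1 + |s|) * min 1 (2 / |t|) := by
  have harg : (-Complex.I * s * t) = ((-(s*t) : ℝ) : ℂ) * Complex.I := by push_cast; ring
  have habs : ‖(((-(s*t) : ℝ) : ℂ) * Complex.I)‖ = |s * t| := by
    simp [abs_mul]
  have hnum2 : ‖1 - Complex.exp (-Complex.I * s * t)‖ ≤ 2 := by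
    calc ‖1 - Complex.exp (-Complex.I * s * t)‖
        ≤ ‖(1:ℂ)‖ + ‖Complex.exp (-Complex.I * s * t)‖ := norm_sub_le _ _
      _ = 2 := by rw [harg, norm_one, Complex.norm_exp_ofReal_mul_I]; norm_num
  have hnum1 : ‖1 - Complex.exp (-Complex.I * s * t)‖ ≤ 2 * (|s| * |t|) := by
    rw [← abs_mul]
    rcases le_or_gt (|s * t|) 1 with h | h
    · rw [norm_sub_rev, harg]
      have := Complex.norm_exp_sub_one_le (x := ((-(s*t) : ℝ) : ℂ) * Complex.I)
        (by rw [habs]; exact h)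
      rw [habs] at this
      exact this
    · linarith
  have hdenom : ‖Complex.I * (t:ℂ)‖ = |t| := by
    rw [norm_mul, Complex.norm_I, one_mul, Complex.norm_real, Real.norm_eq_abs]
  rw [norm_div, hdenom]
  rcases min_cases 1 (2 / |t|) with ⟨hm, hle⟩ | ⟨hm, hle⟩ <;> rw [hm]
  · rcases eq_or_ne t 0 with rfl | ht
    · simp; positivity
    · have h0 : 0 < |t| := abs_pos.mpr ht
      rw [div_le_iff₀ h0]
      nlinarith [abs_nonneg s, abs_nonneg t]
  · rcases eq_or_ne t 0 with rfl | ht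
    · simp
    · have h0 : 0 < |t| := abs_pos.mpr ht
      have h1 : ‖1 - Complex.exp (-Complex.I * s * t)‖ / |t| ≤ 2 / |t| := by gcongr
      have h2 : (0:ℝ) < 2 / |t| := by positivity
      nlinarith [abs_nonneg s]

lemma psi_w_meas : Measurable fun t : ℝ => min 1 (2 / |t|) := by fun_prop

lemma psi_w_nonneg (t : ℝ) : 0 ≤ min 1 (2 / |t|) :=
  le_min zero_le_one (by positivity)

lemma psi_w_le_one (t : ℝ) : min 1 (2 / |t|) ≤ 1 := min_le_left _ _

lemma psi_w_le (t : ℝ) : min 1 (2 / |t|) ≤ 4 / (1 + |t|) := by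
  rcases le_or_gt (|t|) 1 with h | h
  · calc min 1 (2 / |t|) ≤ 1 := psi_w_le_one t
      _ ≤ 4 / (1 + |t|) := by rw [le_div_iff₀ (by positivity)]; linarith
  · calc min 1 (2 / |t|) ≤ 2 / |t| := min_le_right _ _
      _ ≤ 4 / (1 + |t|) := by
          rw [div_le_div_iff₀ (by linarith) (by positivity)]
          nlinarith
  
lemma psi_memW {q : ℝ≥0∞} (hq : 1 < q) : MemLp (fun t : ℝ => min 1 (2 / |t|)) q volume := by
  rcases eq_or_ne q ∞ with rfl | hne
  · exact memLp_top_of_bound psi_w_meas.aestronglyMeasurable 1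
      (Filter.Eventually.of_forall fun t => by
        rw [Real.norm_eq_abs, abs_of_nonneg (psi_w_nonneg t)]; exact psi_w_le_one t)
  · have hq0 : q ≠ 0 := by positivity
    have hc1 : 1 < q.toReal := by
      have := (ENNReal.toReal_lt_toReal (by simp) hne).mpr hq
      simpa using this
    have hint : Integrable (fun t : ℝ => ‖min 1 (2 / |t|)‖ ^ q.toReal) volume := by
      have hbase : Integrable (fun t : ℝ => (4:ℝ) ^ q.toReal * (1 + ‖t‖) ^ (-q.toReal)) volume := by
        apply Integrable.const_mul
        apply integrable_one_add_norm (E := ℝ)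
        simpa using hc1
      apply hbase.mono'
      · exact (psi_w_meas.norm.pow_const _).aestronglyMeasurable
      · refine Filter.Eventually.of_forall fun t => ?_
        have h0 : (0:ℝ) ≤ min 1 (2 / |t|) := psi_w_nonneg t
        rw [Real.norm_eq_abs, abs_of_nonneg (by positivity), Real.norm_eq_abs,
          abs_of_nonneg h0, Real.norm_eq_abs]
        calc min 1 (2 / |t|) ^ q.toReal ≤ (4 / (1 + |t|)) ^ q.toReal :=
              Real.rpow_le_rpow h0 (psi_w_le t) (by linarith)
          _ = 4 ^ q.toReal * (1 + |t|) ^ (-q.toReal) := by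
              rw [Real.div_rpow (by norm_num) (by positivity), Real.rpow_neg (by positivity),
                div_eq_mul_inv]
    have hmem1 : MemLp (fun x : ℝ => ‖min 1 (2/|x|)‖ ^ q.toReal) (q / q) volume := by
      rw [ENNReal.div_self hq0 hne]
      exact (memLp_one_iff_integrable).mpr hint
    exact (memLp_norm_rpow_iff (μ := volume) (p := q)
      psi_w_meas.aestronglyMeasurable hq0 hne).mp hmem1

end AuxPsi

set_option maxHeartbeats 2000000 in
theorem Psi_injective (p : ℝ) (hp : 1 ≤ p) (f : ℝ → ℂ)
    (hf : MemLp f (ENNReal.ofReal p) volume)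
    (hΨ : ∀ s : ℝ,
      (∫ t : ℝ, (1 - Complex.exp (-Complex.I * s * t)) / (Complex.I * t) * f t) = 0) :
    f =ᵐ[volume] 0 := by
  set r := ENNReal.ofReal p with hr
  have hr1 : 1 ≤ r := by rwa [hr, ENNReal.one_le_ofReal]
  have hrtop : r ≠ (∞ : ℝ≥0∞) := ENNReal.ofReal_ne_top
  have hloc : LocallyIntegrable f volume := hf.locallyIntegrable hr1
  -- the weight w and integrability of w • f
  set w : ℝ → ℝ := fun t => min 1 (2 / |t|) with hw
  have hwf : Integrable (fun t => w t • f t) volume := by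
    set q : ℝ≥0∞ := (1 - 1/r)⁻¹ with hq
    have h1r : 1/r ≤ 1 := by
      rw [one_div, ENNReal.inv_le_one]; exact hr1
    have h1r0 : 1/r ≠ 0 := by
      simp only [one_div, ne_eq, ENNReal.inv_eq_zero]; exact hrtop
    have hq1 : 1 < q := by
      rw [hq, ENNReal.one_lt_inv]
      exact ENNReal.sub_lt_self (by simp) (by simp) h1r0
    have hpqr : (1:ℝ≥0∞)/1 = 1/q + 1/r := by
      rw [hq, one_div, one_div, inv_inv, tsub_add_cancel_of_le h1r]
      simp
    have hmem : MemLp (w • f) 1 volume := by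
        haveI : ENNReal.HolderTriple q r 1 := ⟨by rw [inv_one]; simpa [one_div] using hpqr.symm⟩
        exact MemLp.smul hf (psi_memW hq1)
    exact (memLp_one_iff_integrable).mp hmem
  have hwfnorm : ∀ t : ℝ, ‖w t • f t‖ = w t * ‖f t‖ := fun t => by
    rw [norm_smul, Real.norm_eq_abs, abs_of_nonneg (psi_w_nonneg t)]
  apply ae_eq_zero_of_integral_contDiff_smul_eq_zero hloc
  intro g hgsmooth hgsupp
  set h : ℝ → ℂ := fun x => (g x : ℂ) with hhdef
  have hhsmooth : ContDiff ℝ ∞ h := Complex.ofRealCLM.contDiff.comp hgsmooth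
  have hhsupp : HasCompactSupport h := by
    have := hgsupp.comp_left (g := Complex.ofReal) Complex.ofReal_zero
    exact this
  have hpi : (2 * π) ≠ 0 := by positivity
  set G : ℝ → ℂ := fun ξ : ℝ => Complex.I * ((2 * π * ξ : ℝ) : ℂ) * h (2 * π * ξ) with hGdef
  have hGsmooth : ContDiff ℝ ∞ G := by
    apply ContDiff.mul
    · exact contDiff_const.mul
        (Complex.ofRealCLM.contDiff.comp (contDiff_const.mul contDiff_id))
    · exact hhsmooth.comp (contDiff_const.mul contDiff_id)
  have hGsupp : HasCompactSupport G := by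
    have h1 : HasCompactSupport fun ξ : ℝ => h (2 * π * ξ) :=
      hhsupp.comp_isClosedEmbedding (Homeomorph.mulLeft₀ (2*π) hpi).isClosedEmbedding
    exact h1.mul_left
  set Gs : SchwartzMap ℝ ℂ := schwartzOfCompactSupport G hGsmooth hGsupp with hGs
  set ψ : SchwartzMap ℝ ℂ := (SchwartzMap.fourierTransformCLE ℝ (SchwartzMap ℝ ℂ)).symm Gs with hψdef
  have hFψ : ∀ x, 𝓕 (⇑ψ) x = G x := by
    intro x
    have h1 : SchwartzMap.fourierTransformCLE ℝ (SchwartzMap ℝ ℂ) ψ = Gs :=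
      (SchwartzMap.fourierTransformCLE ℝ (SchwartzMap ℝ ℂ)).apply_symm_apply Gs
    have h2 : ⇑(SchwartzMap.fourierTransformCLE ℝ (SchwartzMap ℝ ℂ) ψ) = 𝓕 ⇑ψ := by
      rfl
    rw [← h2, h1]; rfl
  have key1 : ∀ t : ℝ, (∫ s : ℝ, ψ s * Complex.exp (-Complex.I * s * t))
      = Complex.I * t * h t := by
    intro t
    have h2 : 𝓕 (⇑ψ) (t / (2 * π)) = ∫ s : ℝ, ψ s * Complex.exp (-Complex.I * s * t) := by
      rw [Real.fourier_real_eq_integral_exp_smul]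
      refine integral_congr_ae (Filter.Eventually.of_forall fun v => ?_)
      simp only [smul_eq_mul]
      rw [mul_comm]
      congr 1
      have hv : (-2) * π * v * (t / (2 * π)) = -(v * t) := by field_simp
      rw [hv]
      push_cast
      ring
    rw [← h2, hFψ]
    show Complex.I * ((2 * π * (t / (2*π)) : ℝ) : ℂ) * h (2 * π * (t / (2*π))) = _
    have hv2 : 2 * π * (t / (2 * π)) = t := by field_simp
    rw [hv2]
  have hψint : Integrable (⇑ψ) volume := ψ.integrable
  have hψexpint : ∀ t : ℝ, Integrable (fun s : ℝ => ψ s * Complex.exp (-Complex.I * s * t))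
      volume := by
    intro t
    have hc : Continuous fun s : ℝ => Complex.exp (-Complex.I * s * t) := by fun_prop
    apply Integrable.mono' hψint.norm ((ψ.continuous.mul hc).aestronglyMeasurable)
    refine Filter.Eventually.of_forall fun s => ?_
    rw [Pi.mul_apply, norm_mul]
    have harg : (-Complex.I * s * t) = ((-(s*t) : ℝ) : ℂ) * Complex.I := by push_cast; ring
    rw [harg, Complex.norm_exp_ofReal_mul_I, mul_one]
  have hint0 : (∫ s : ℝ, (ψ s : ℂ)) = 0 := by
    have := key1 0
    simpa using this
  have key : ∀ t : ℝ, t ≠ 0 →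
      (∫ s : ℝ, ψ s * ((1 - Complex.exp (-Complex.I * s * t)) / (Complex.I * t))) = - h t := by
    intro t ht
    have hIt : (Complex.I * (t:ℂ)) ≠ 0 :=
      mul_ne_zero Complex.I_ne_zero (by exact_mod_cast ht)
    have hsplit : (∫ s : ℝ, ψ s * ((1 - Complex.exp (-Complex.I * s * t)) / (Complex.I * t)))
        = (∫ s : ℝ, (ψ s - ψ s * Complex.exp (-Complex.I * s * t))) / (Complex.I * t) := by
      rw [← integral_div]
      refine integral_congr_ae (Filter.Eventually.of_forall fun s => ?_)
      ring
    rw [hsplit, integral_sub hψint (hψexpint t), hint0, key1 t]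
    field_simp
    rw [zero_sub, neg_div, mul_right_comm, mul_div_cancel_right₀ _ (Complex.ofReal_ne_zero.mpr ht)]
  -- Fubini setup
  set F : ℝ → ℝ → ℂ :=
    fun s t => ψ s * ((1 - Complex.exp (-Complex.I * s * t)) / (Complex.I * t) * f t) with hFdef
  have hKmeas : Measurable fun z : ℝ × ℝ =>
      (1 - Complex.exp (-Complex.I * z.1 * z.2)) / (Complex.I * z.2) := by
    apply Measurable.div <;> fun_prop
  have hFmeas : AEStronglyMeasurable (Function.uncurry F) ((volume : Measure ℝ).prod volume) :=
    (ψ.continuous.comp continuous_fst).aestronglyMeasurable.mul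
      (hKmeas.aestronglyMeasurable.mul hf.1.comp_snd)
  have hbound : ∀ s t : ℝ, ‖F s t‖ ≤ ‖ψ s‖ * (2 * (1 + |s|)) * ‖w t • f t‖ := by
    intro s t
    have hk := psi_normK_le s t
    calc ‖F s t‖
        = ‖ψ s‖ * (‖(1 - Complex.exp (-Complex.I * s * t)) / (Complex.I * t)‖ * ‖f t‖) := by
          simp only [hFdef]
          rw [norm_mul, norm_mul]
      _ ≤ ‖ψ s‖ * ((2 * (1 + |s|) * w t) * ‖f t‖) :=
          mul_le_mul_of_nonneg_left
            (mul_le_mul_of_nonneg_right hk (norm_nonneg _)) (norm_nonneg _)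
      _ = ‖ψ s‖ * (2 * (1 + |s|)) * ‖w t • f t‖ := by rw [hwfnorm t]; ring
  have hinner : ∀ s : ℝ, Integrable (F s) volume := by
    intro s
    apply Integrable.mono' (hwf.norm.const_mul (‖ψ s‖ * (2 * (1 + |s|))))
    · apply AEStronglyMeasurable.mul aestronglyMeasurable_const
      exact (hKmeas.comp (measurable_const.prodMk measurable_id)).aestronglyMeasurable.mul hf.1
    · exact Filter.Eventually.of_forall fun t => hbound s t
  have hCnn : (0:ℝ) ≤ ∫ t, ‖w t • f t‖ := integral_nonneg fun t => norm_nonneg _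
  have houter : Integrable (fun s => ∫ t, ‖F s t‖) volume := by
    have hψ1 : Integrable (fun s : ℝ => ‖s‖ * ‖ψ s‖) volume := by
      have := ψ.integrable_pow_mul (volume) 1
      simpa using this
    have hB : Integrable
        (fun s : ℝ => (‖ψ s‖ + ‖s‖ * ‖ψ s‖) * (2 * ∫ t, ‖w t • f t‖)) volume :=
      (hψint.norm.add hψ1).mul_const _
    apply Integrable.mono' hB hFmeas.norm.integral_prod_right'
    refine Filter.Eventually.of_forall fun s => ?_
    simp only [Function.uncurry_apply_pair, Real.norm_eq_abs]
    have hs0 : (0:ℝ) ≤ ∫ t, ‖F s t‖ := integral_nonneg fun t => norm_nonneg _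
    rw [abs_of_nonneg hs0]
    calc (∫ t, ‖F s t‖) ≤ ∫ t, ‖ψ s‖ * (2 * (1 + |s|)) * ‖w t • f t‖ := by
          apply integral_mono_of_nonneg (Filter.Eventually.of_forall fun t => norm_nonneg _)
            (hwf.norm.const_mul _) (Filter.Eventually.of_forall fun t => hbound s t)
      _ = ‖ψ s‖ * (2 * (1 + |s|)) * ∫ t, ‖w t • f t‖ := integral_const_mul _ _
      _ ≤ (‖ψ s‖ + ‖s‖ * ‖ψ s‖) * (2 * ∫ t, ‖w t • f t‖) := by
          rw [Real.norm_eq_abs]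
          have := norm_nonneg (ψ s)
          nlinarith [hCnn]
  have hFint : Integrable (Function.uncurry F) ((volume : Measure ℝ).prod volume) :=
    (integrable_prod_iff hFmeas).mpr
      ⟨Filter.Eventually.of_forall hinner, houter⟩
  have hswap := integral_integral_swap hFint
  have hLHS : (∫ s : ℝ, ∫ t : ℝ, F s t) = 0 := by
    have hz : ∀ s : ℝ, (∫ t : ℝ, F s t) = 0 := by
      intro s
      simp only [hFdef]
      rw [integral_const_mul, hΨ s, mul_zero]
    simp_rw [hz]
    exact integral_zero _ _
  rw [hLHS] at hswap
  have hRHS : (∫ t : ℝ, ∫ s : ℝ, F s t) = ∫ t : ℝ, -(h t * f t) := by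
    apply integral_congr_ae
    have h0 : ∀ᵐ t : ℝ ∂(volume : Measure ℝ), t ≠ 0 := by
      have : (volume : Measure ℝ) ({0} : Set ℝ) = 0 := measure_singleton 0
      exact compl_mem_ae_iff.mpr this
    filter_upwards [h0] with t ht
    calc (∫ s : ℝ, F s t)
        = (∫ s : ℝ, ψ s * ((1 - Complex.exp (-Complex.I * s * t)) / (Complex.I * t))) * f t := by
          rw [← integral_mul_const]
          refine integral_congr_ae (Filter.Eventually.of_forall fun s => ?_)
          simp only [hFdef]
          ring
      _ = -(h t * f t) := by rw [key t ht]; ring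
  rw [hRHS, integral_neg] at hswap
  have hzero : (∫ t : ℝ, h t * f t) = 0 := neg_eq_zero.mp hswap.symm
  have : (∫ x : ℝ, (g x : ℂ) * f x) = 0 := hzero
  simpa [Complex.real_smul] using this
end

section
/- Let f ∈ L^p(ℝ) for some 1 ≤ p < ∞ and let φ be a Schwartz function. Then ∫_ℝ Ψ_f(s) φ'(s) ds = −∫_ℝ f(t) \hatφ(t) dt, where \hatφ(t) = ∫_ℝ e^{-ist} φ(s) ds. -/
open MeasureTheory Filter ENNReal

lemma exp_norm_one (s t : ℝ) : ‖Complex.exp (-Complex.I * s * t)‖ = 1 := by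
  have h : (-Complex.I * s * t).re = 0 := by simp
  rw [Complex.norm_exp, h, Real.exp_zero]

lemma num_norm_le_two (s t : ℝ) : ‖(1 - Complex.exp (-Complex.I * s * t))‖ ≤ 2 := by
  calc ‖(1 - Complex.exp (-Complex.I * s * t))‖
      ≤ ‖(1:ℂ)‖ + ‖Complex.exp (-Complex.I * s * t)‖ := norm_sub_le _ _
    _ = 2 := by rw [exp_norm_one]; norm_num

-- norm bound for the kernel
lemma u_norm_bound (s t : ℝ) :
    ‖(1 - Complex.exp (-Complex.I * s * t)) / (Complex.I * t)‖ ≤ 4 * (|s| + 1) / (1 + |t|) := by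
  rcases eq_or_ne t 0 with rfl | ht
  · simp
    positivity
  have htpos : (0:ℝ) < |t| := abs_pos.mpr ht
  have hden : ‖(Complex.I * (t:ℂ))‖ = |t| := by
    simp
  have hb2 := num_norm_le_two s t
  have habs : ‖(-Complex.I * s * t)‖ = |s| * |t| := by
    simp [abs_mul]
  have hU : ‖(1 - Complex.exp (-Complex.I * s * t)) / (Complex.I * t)‖
      = ‖(1 - Complex.exp (-Complex.I * s * t))‖ / |t| := by
    rw [norm_div, hden]
  rcases le_total (|t|) 1 with h1 | h1
  · -- small t : bound by 2|s|
    have hsmall : ‖(1 - Complex.exp (-Complex.I * s * t)) / (Complex.I * t)‖ ≤ 2 * |s| := by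
      rcases le_total (|s| * |t|) 1 with hst | hst
      · have h2 := Complex.norm_exp_sub_one_le (x := -Complex.I * s * t) (by rw [habs]; exact hst)
        rw [habs] at h2
        have hnn : ‖(1 - Complex.exp (-Complex.I * s * t))‖ ≤ 2 * (|s| * |t|) := by
          rw [norm_sub_rev]
          exact h2
        rw [hU, div_le_iff₀ htpos]
        nlinarith [abs_nonneg s]
      · rw [hU, div_le_iff₀ htpos]
        nlinarith [abs_nonneg s, htpos]
    calc ‖(1 - Complex.exp (-Complex.I * s * t)) / (Complex.I * t)‖ ≤ 2 * |s| := hsmall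
      _ ≤ 4 * (|s| + 1) / (1 + |t|) := by
          rw [le_div_iff₀ (by positivity)]
          nlinarith [abs_nonneg s]
  · -- large t : bound by 2/|t|
    rw [hU, div_le_div_iff₀ htpos (by positivity)]
    nlinarith [abs_nonneg s, hb2, mul_le_mul_of_nonneg_left h1 (le_of_lt htpos),
      mul_nonneg (abs_nonneg s) (abs_nonneg t)]

-- integration by parts for fixed t ≠ 0
lemma inner_ibp (φ : SchwartzMap ℝ ℂ) {t : ℝ} (ht : t ≠ 0) :
    (∫ s : ℝ, (1 - Complex.exp (-Complex.I * s * t)) / (Complex.I * t) *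
      deriv (fun x : ℝ => φ x) s) = -∫ s : ℝ, Complex.exp (-Complex.I * s * t) * φ s := by
  have hc : (Complex.I * (t:ℂ)) ≠ 0 :=
    mul_ne_zero Complex.I_ne_zero (Complex.ofReal_ne_zero.mpr ht)
  set u : ℝ → ℂ := fun s => (1 - Complex.exp (-Complex.I * s * t)) / (Complex.I * t) with hu_def
  set u' : ℝ → ℂ := fun s => Complex.exp (-Complex.I * s * t) with hu'_def
  have hu : ∀ s : ℝ, HasDerivAt u (u' s) s := by
    intro s
    have h1 : HasDerivAt (fun y : ℂ => -Complex.I * y * ↑t) (-Complex.I * ↑t) (s:ℂ) := by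
      have hfun : (fun y : ℂ => -Complex.I * y * ↑t) = fun y : ℂ => y * (-Complex.I * ↑t) := by
        funext y; ring
      rw [hfun]
      exact hasDerivAt_mul_const _
    have h2 := h1.cexp
    have h3 := (h2.const_sub 1).div_const (Complex.I * (t:ℂ))
    have h4 := h3.comp_ofReal
    convert h4 using 1
    rw [hu'_def]
    field_simp
    exact (div_self (Complex.ofReal_ne_zero.mpr ht)).symm
  have hv : ∀ s : ℝ, HasDerivAt (fun x : ℝ => φ x) (deriv (fun x : ℝ => φ x) s) s :=
    fun s => (φ.differentiableAt).hasDerivAt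
  have hubd : ∀ s, ‖u s‖ ≤ 2 / |t| := by
    intro s
    have hden : ‖(Complex.I * (t:ℂ))‖ = |t| := by simp
    rw [hu_def]
    simp only [norm_div, hden]
    gcongr
    exact num_norm_le_two s t
  have hu'bd : ∀ s, ‖u' s‖ ≤ 1 := fun s => (exp_norm_one s t).le
  have hucont : Continuous u := by
    apply Continuous.div_const
    exact continuous_const.sub (Complex.continuous_exp.comp (by fun_prop))
  have hu'cont : Continuous u' := Complex.continuous_exp.comp (by fun_prop)
  have hφint : Integrable (fun x : ℝ => φ x) volume := φ.integrable
  have hφ'int : Integrable (deriv (fun x : ℝ => φ x)) volume := by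
    have h : deriv (fun x : ℝ => φ x) = fun x => SchwartzMap.derivCLM ℝ ℂ φ x := by
      funext x; rw [SchwartzMap.derivCLM_apply]
    rw [h]
    exact (SchwartzMap.derivCLM ℝ ℂ φ).integrable
  have huv' : Integrable (u * deriv (fun x : ℝ => φ x)) volume :=
    hφ'int.bdd_mul hucont.aestronglyMeasurable (c := 2 / |t|) (Eventually.of_forall hubd)
  have hu'v : Integrable (u' * fun x : ℝ => φ x) volume :=
    hφint.bdd_mul hu'cont.aestronglyMeasurable (c := 1) (Eventually.of_forall hu'bd)
  have huv : Integrable (u * fun x : ℝ => φ x) volume :=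
    hφint.bdd_mul hucont.aestronglyMeasurable (c := 2 / |t|) (Eventually.of_forall hubd)
  exact integral_mul_deriv_eq_deriv_mul_of_integrable (fun x _ => hu x) (fun x _ => hv x) huv' hu'v huv

-- Hölder: (1+|t|)⁻¹ • f is integrable
lemma holder_int (p : ℝ) (hp : 1 ≤ p) (f : ℝ → ℂ)
    (hf : MemLp f (ENNReal.ofReal p) volume) :
    Integrable (fun t : ℝ => ((1 + |t|)⁻¹ : ℝ) • f t) volume := by
  have hcont : Continuous (fun t : ℝ => ((1 + |t|)⁻¹ : ℝ)) := by
    apply Continuous.inv₀ (by fun_prop)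
    intro t; positivity
  rcases eq_or_lt_of_le hp with hp1 | hp1
  · -- p = 1
    have hfi : Integrable f volume := by
      rw [← memLp_one_iff_integrable]
      simpa [← hp1, ENNReal.ofReal_one] using hf
    apply Integrable.mono' hfi.norm (hcont.aestronglyMeasurable.smul hf.1)
    filter_upwards with t
    simp only [Pi.smul_apply', norm_smul]
    have h2 : ‖((1 + |t|)⁻¹ : ℝ)‖ ≤ 1 := by
      rw [Real.norm_eq_abs, abs_of_pos (by positivity), inv_le_one_iff₀]
      right; linarith [abs_nonneg t]
    nlinarith [norm_nonneg (f t), norm_nonneg ((1 + |t|)⁻¹ : ℝ)]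
  · -- p > 1, Hölder
    set q : ℝ := (1 - 1/p)⁻¹ with hq_def
    have hp0 : (0:ℝ) < p := by linarith
    have h1p : 0 < 1 - 1/p := by
      have h3 : 1/p < 1 := by rw [div_lt_one hp0]; exact hp1
      linarith
    have hq1 : 1 < q := by
      rw [hq_def]
      exact (one_lt_inv₀ h1p).mpr (by
        have : 0 < 1/p := by positivity
        linarith)
    have hq0 : (0:ℝ) < q := by linarith
    have hsum : q⁻¹ + p⁻¹ = (1:ℝ) := by rw [hq_def, inv_inv]; ring
    have hh : MemLp (fun t : ℝ => ((1 + |t|)⁻¹ : ℝ)) (ENNReal.ofReal q) volume := by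
      have hq0' : ENNReal.ofReal q ≠ 0 := by
        simp only [ne_eq, ENNReal.ofReal_eq_zero, not_le]; linarith
      have hqtop : ENNReal.ofReal q ≠ ⊤ := ENNReal.ofReal_ne_top
      rw [← memLp_norm_rpow_iff hcont.aestronglyMeasurable hq0' hqtop,
        ENNReal.div_self hq0' hqtop, memLp_one_iff_integrable]
      have hqr : (ENNReal.ofReal q).toReal = q := ENNReal.toReal_ofReal (by linarith)
      rw [hqr]
      have heq : (fun t : ℝ => ‖((1 + |t|)⁻¹ : ℝ)‖ ^ q) = fun t : ℝ => (1 + ‖t‖) ^ (-q) := by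
        funext t
        rw [Real.norm_eq_abs ((1 + |t|)⁻¹), abs_of_pos (by positivity),
          Real.rpow_neg (by positivity), ← Real.inv_rpow (by positivity), Real.norm_eq_abs]
      rw [heq]
      exact integrable_one_add_norm (by simpa using hq1)
    have hpq : 1/(1:ℝ≥0∞) = 1/(ENNReal.ofReal q) + 1/(ENNReal.ofReal p) := by
      simp only [one_div, inv_one]
      rw [← ENNReal.ofReal_inv_of_pos hq0, ← ENNReal.ofReal_inv_of_pos hp0,
        ← ENNReal.ofReal_add (le_of_lt (inv_pos.mpr hq0)) (le_of_lt (inv_pos.mpr hp0)), hsum,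
        ENNReal.ofReal_one]
    rw [← memLp_one_iff_integrable]
    haveI : ENNReal.HolderTriple (ENNReal.ofReal q) (ENNReal.ofReal p) 1 :=
      ⟨by simpa [one_div] using hpq.symm⟩
    exact MemLp.smul hf hh

theorem Psi_parts_schwartz (p : ℝ) (hp : 1 ≤ p) (f : ℝ → ℂ)
    (hf : MemLp f (ENNReal.ofReal p) volume) (φ : SchwartzMap ℝ ℂ) :
    (∫ s : ℝ, (∫ t : ℝ, (1 - Complex.exp (-Complex.I * s * t)) / (Complex.I * t) * f t) *
        deriv (fun x : ℝ => φ x) s) =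
      -∫ t : ℝ, f t * ∫ s : ℝ, Complex.exp (-Complex.I * s * t) * φ s := by
  set φ' : ℝ → ℂ := deriv (fun x : ℝ => φ x) with hφ'_def
  have hφ'eq : φ' = fun x => SchwartzMap.derivCLM ℝ ℂ φ x := by
    funext x; rw [hφ'_def, SchwartzMap.derivCLM_apply]
  have hφ'int : Integrable φ' volume := by rw [hφ'eq]; exact (SchwartzMap.derivCLM ℝ ℂ φ).integrable
  have hφ'cont : Continuous φ' := by
    rw [hφ'eq]; exact (SchwartzMap.derivCLM ℝ ℂ φ).continuous
  have hg1 : Integrable (fun s : ℝ => 4 * (|s| + 1) * ‖φ' s‖) volume := by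
    have h1 := (SchwartzMap.derivCLM ℝ ℂ φ).integrable_pow_mul (μ := volume) 1
    have h0 := (SchwartzMap.derivCLM ℝ ℂ φ).integrable_pow_mul (μ := volume) 0
    apply ((h1.const_mul 4).add (h0.const_mul 4)).congr
    filter_upwards with s
    rw [hφ'eq]
    simp only [Pi.add_apply, pow_one, pow_zero, one_mul, Real.norm_eq_abs]
    ring
  have hg2 : Integrable (fun t : ℝ => ((1 + |t|)⁻¹ : ℝ) • f t) volume := holder_int p hp f hf
  set F : ℝ × ℝ → ℂ := fun z =>
    (1 - Complex.exp (-Complex.I * z.1 * z.2)) / (Complex.I * z.2) * f z.2 * φ' z.1 with hF_def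
  have hFmeas : AEStronglyMeasurable F (volume.prod volume) := by
    apply AEStronglyMeasurable.mul
    apply AEStronglyMeasurable.mul
    · apply Measurable.aestronglyMeasurable
      apply Measurable.div <;> fun_prop
    · exact hf.1.comp_snd
    · exact (hφ'cont.comp continuous_fst).aestronglyMeasurable
  have hgint : Integrable (fun z : ℝ × ℝ =>
      (4 * (|z.1| + 1) * ‖φ' z.1‖) * ‖((1 + |z.2|)⁻¹ : ℝ) • f z.2‖) (volume.prod volume) :=
    hg1.mul_prod hg2.norm
  have hFint : Integrable F (volume.prod volume) := by
    apply Integrable.mono' hgint hFmeas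
    filter_upwards with z
    rw [hF_def]
    simp only
    rw [norm_mul, norm_mul, norm_smul, Real.norm_eq_abs (r := ((1 + |z.2|)⁻¹ : ℝ)),
      abs_of_pos (a := ((1 + |z.2|)⁻¹ : ℝ)) (by positivity)]
    calc ‖(1 - Complex.exp (-Complex.I * z.1 * z.2)) / (Complex.I * z.2)‖ * ‖f z.2‖ * ‖φ' z.1‖
        ≤ (4 * (|z.1| + 1) / (1 + |z.2|)) * ‖f z.2‖ * ‖φ' z.1‖ := by
          gcongr
          exact u_norm_bound z.1 z.2
      _ = 4 * (|z.1| + 1) * ‖φ' z.1‖ * ((1 + |z.2|)⁻¹ * ‖f z.2‖) := by ring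
  have step1 : (∫ s : ℝ, (∫ t : ℝ,
      (1 - Complex.exp (-Complex.I * s * t)) / (Complex.I * t) * f t) * φ' s)
      = ∫ s : ℝ, ∫ t : ℝ,
        (1 - Complex.exp (-Complex.I * s * t)) / (Complex.I * t) * f t * φ' s := by
    apply integral_congr_ae
    filter_upwards with s
    rw [← integral_mul_const]
  have step2 : (∫ s : ℝ, ∫ t : ℝ,
      (1 - Complex.exp (-Complex.I * s * t)) / (Complex.I * t) * f t * φ' s)
      = ∫ t : ℝ, ∫ s : ℝ,
        (1 - Complex.exp (-Complex.I * s * t)) / (Complex.I * t) * f t * φ' s :=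
    integral_integral_swap hFint
  have step3 : ∀ t : ℝ, (∫ s : ℝ,
      (1 - Complex.exp (-Complex.I * s * t)) / (Complex.I * t) * f t * φ' s)
      = f t * ∫ s : ℝ, (1 - Complex.exp (-Complex.I * s * t)) / (Complex.I * t) * φ' s := by
    intro t
    rw [← integral_const_mul]
    apply integral_congr_ae
    filter_upwards with s
    ring
  have h0ae : ∀ᵐ t : ℝ, t ≠ 0 := by
    refine ae_iff.mpr ?_
    simpa using measure_singleton (0:ℝ)
  rw [step1, step2]
  have step4 : (∫ t : ℝ, ∫ s : ℝ,
      (1 - Complex.exp (-Complex.I * s * t)) / (Complex.I * t) * f t * φ' s)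
      = ∫ t : ℝ, f t * -(∫ s : ℝ, Complex.exp (-Complex.I * s * t) * φ s) := by
    apply integral_congr_ae
    filter_upwards [h0ae] with t ht
    rw [step3 t, inner_ibp φ ht]
  rw [step4]
  simp_rw [mul_neg]
  rw [integral_neg]
end
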